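/- arXiv:1810.12504 — 3 statements merged into one kernel-verified Lean document; each statement's English description precedes it below -/
import Mathlib

section
/- Let λ ∈ ℂ with |λ| = 1, and let U_x = [[a_x, b_x],[c_x, d_x]] (x ∈ ℤ) be 2×2 unitary matrices with a_x b_x c_x d_x ≠ 0. Define Ψ(x) = D⁺_x D⁺_{x−1} ⋯ D⁺_1 Ψ(0) for x ≥ 1, where D⁺_x = [[(λ² − b_x c_{x−1})/(λ a_x), −b_x d_{x−1}/(λ a_x)],[c_{x−1}/λ, d_{x−1}/λ]]. Then for all x ≥ 1, the eigenvalue relation λ Ψ^L(x) = a_{x+1}Ψ^L(x+1) + b_{x+1}Ψ^R(x+1) and λ Ψ^R(x) = c_{x−1}Ψ^L(x−1) + d_{x−1}Ψ^R(x−1) holds componentwise whenever the recursion defining Ψ is satisfied. -/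
/-!
The transfer matrix `D⁺_x` is what one gets by solving for `Ψ(x)` the right relation at `x`,
`λ Ψ^R(x) = c_{x-1} Ψ^L(x-1) + d_{x-1} Ψ^R(x-1)` (its second row), together with the left relation
at `x - 1`, `λ Ψ^L(x-1) = a_x Ψ^L(x) + b_x Ψ^R(x)` (its first row, after substituting the second).
So the recursion at `x + 1` gives back the left relation at `x`, and the recursion at `x` the right
one.
-/

namespace QuantumWalk

variable {K : Type*} [Field K] {lam a b c d L R L' R' : K}

theorem mul_right_of_transfer (hlam : lam ≠ 0) (hR' : R' = c / lam * L + d / lam * R) :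
    lam * R' = c * L + d * R := by
  rw [hR']
  field_simp

theorem mul_left_of_transfer (hlam : lam ≠ 0) (ha : a ≠ 0)
    (hL' : L' = (lam ^ 2 - b * c) / (lam * a) * L - b * d / (lam * a) * R)
    (hR' : R' = c / lam * L + d / lam * R) :
    lam * L = a * L' + b * R' := by
  rw [hL', hR']
  field_simp
  ring

end QuantumWalk

open QuantumWalk in
theorem stmt_1_general (lam : ℂ) (hlam : ‖lam‖ = 1)
    (a b c d : ℤ → ℂ)
    (hne : ∀ x : ℤ, a x * b x * c x * d x ≠ 0)
    (L R : ℤ → ℂ)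
    (hrec : ∀ x : ℤ, 1 ≤ x →
      L x = (lam ^ 2 - b x * c (x - 1)) / (lam * a x) * L (x - 1)
              - b x * d (x - 1) / (lam * a x) * R (x - 1) ∧
      R x = c (x - 1) / lam * L (x - 1) + d (x - 1) / lam * R (x - 1)) :
    ∀ x : ℤ, 1 ≤ x →
      lam * L x = a (x + 1) * L (x + 1) + b (x + 1) * R (x + 1) ∧
      lam * R x = c (x - 1) * L (x - 1) + d (x - 1) * R (x - 1) := by
  have hlam0 : lam ≠ 0 := norm_ne_zero_iff.mp (hlam ▸ one_ne_zero)
  intro x hx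
  have ha : a (x + 1) ≠ 0 :=
    left_ne_zero_of_mul (left_ne_zero_of_mul (left_ne_zero_of_mul (hne (x + 1))))
  obtain ⟨hL, hR⟩ := hrec (x + 1) (by omega)
  rw [add_sub_cancel_right] at hL hR
  exact ⟨mul_left_of_transfer hlam0 ha hL hR, mul_right_of_transfer hlam0 (hrec x hx).2⟩

theorem stmt_1 (lam : ℂ) (hlam : ‖lam‖ = 1)
    (a b c d : ℤ → ℂ)
    (hU : ∀ x : ℤ, (!![a x, b x; c x, d x] : Matrix (Fin 2) (Fin 2) ℂ) ∈
      Matrix.unitaryGroup (Fin 2) ℂ)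
    (hne : ∀ x : ℤ, a x * b x * c x * d x ≠ 0)
    (L R : ℤ → ℂ)
    (hrec : ∀ x : ℤ, 1 ≤ x →
      L x = (lam ^ 2 - b x * c (x - 1)) / (lam * a x) * L (x - 1)
              - b x * d (x - 1) / (lam * a x) * R (x - 1) ∧
      R x = c (x - 1) / lam * L (x - 1) + d (x - 1) / lam * R (x - 1)) :
    ∀ x : ℤ, 1 ≤ x →
      lam * L x = a (x + 1) * L (x + 1) + b (x + 1) * R (x + 1) ∧
      lam * R x = c (x - 1) * L (x - 1) + d (x - 1) * R (x - 1) :=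
  stmt_1_general lam hlam a b c d hne L R hrec
end

section
/- Let N ∈ ℕ, N ≥ 1, θ ∈ ℝ with cos θ ≠ 0, and α : ℤ → ℝ with α_{x+1} − α_x ≡ 2π/N (mod 2π). Define D_x = [[e^{iπ/N}cos θ, e^{iα_x}sin θ],[e^{−iα_x}sin θ, −e^{−iπ/N}cos θ]]. Then for each x, D_{x+1} D_x = diag(e^{2πi/N}, e^{−2πi/N}). -/
open Complex Matrix

/-!
Write `l = e^{iπ/N}` and `a_x = e^{iα_x}`. The condition on `α` says exactly that
`a_{x+1} = l² a_x`, and with this substitution the product `D_{x+1} D_x` collapses entrywise to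
`diag(l², l⁻²)`, using nothing but `cos² θ + sin² θ = 1`.
-/

/-- `D_x = transferMatrix (e^{iπ/N}) (e^{iα_x}) (cos θ) (sin θ)`. -/
def transferMatrix {K : Type*} [Field K] (l a c s : K) : Matrix (Fin 2) (Fin 2) K :=
  !![l * c, a * s; a⁻¹ * s, -l⁻¹ * c]

theorem transferMatrix_mul_transferMatrix {K : Type*} [Field K] {l a c s : K}
    (hl : l ≠ 0) (ha : a ≠ 0) (hcs : c ^ 2 + s ^ 2 = 1) :
    transferMatrix l (l ^ 2 * a) c s * transferMatrix l a c s = !![l ^ 2, 0; 0, (l ^ 2)⁻¹] := by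
  rw [transferMatrix, transferMatrix, mul_fin_two]
  ext i j
  fin_cases i <;> fin_cases j <;>
    simp only [Fin.zero_eta, Fin.mk_one, Fin.isValue, of_apply, cons_val', cons_val_zero,
      cons_val_one, cons_val_fin_one] <;>
    field_simp
  · exact hcs
  · ring
  · ring
  · linear_combination hcs

theorem exp_I_mul_eq_of_sub_eq {u v t : ℝ} (h : ∃ k : ℤ, u - v = t + 2 * Real.pi * k) :
    exp (I * u) = exp (I * t) * exp (I * v) := by
  obtain ⟨k, hk⟩ := h
  rw [← exp_add, exp_eq_exp_iff_exists_int]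
  exact ⟨k, by rw [show u = v + t + 2 * Real.pi * k by linarith]; push_cast; ring⟩

theorem stmt_5_general (N : ℕ) (θ : ℝ)
    (α : ℤ → ℝ)
    (hα : ∀ x : ℤ, ∃ k : ℤ, α (x + 1) - α x = 2 * Real.pi / N + 2 * Real.pi * k)
    (D : ℤ → Matrix (Fin 2) (Fin 2) ℂ)
    (hD : ∀ x : ℤ, D x =
      !![Complex.exp (Complex.I * (Real.pi / N)) * Real.cos θ,
         Complex.exp (Complex.I * α x) * Real.sin θ;
         Complex.exp (-Complex.I * α x) * Real.sin θ,
         -Complex.exp (-Complex.I * (Real.pi / N)) * Real.cos θ])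
    (x : ℤ) :
    D (x + 1) * D x =
      !![Complex.exp (2 * Real.pi * Complex.I / N), 0;
         0, Complex.exp (-(2 * Real.pi * Complex.I) / N)] := by
  set l := exp (I * (Real.pi / N))
  have hD' : ∀ y, D y = transferMatrix l (exp (I * α y)) (Real.cos θ) (Real.sin θ) := fun y => by
    simp only [hD, transferMatrix, neg_mul, Complex.exp_neg]; rfl
  have hl2 : l ^ 2 = exp (2 * Real.pi * I / N) := by
    rw [← exp_nat_mul]; ring_nf
  have hstep : exp (I * α (x + 1)) = l ^ 2 * exp (I * α x) := by
    rw [hl2, exp_I_mul_eq_of_sub_eq (hα x)]; push_cast; ring_nf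
  have hcs : (Real.cos θ : ℂ) ^ 2 + (Real.sin θ : ℂ) ^ 2 = 1 := by
    exact_mod_cast Real.cos_sq_add_sin_sq θ
  rw [hD', hD', hstep, transferMatrix_mul_transferMatrix (exp_ne_zero _) (exp_ne_zero _) hcs, hl2,
    neg_div, Complex.exp_neg]

theorem stmt_5 (N : ℕ) (hN : 1 ≤ N) (θ : ℝ) (hcos : Real.cos θ ≠ 0)
    (α : ℤ → ℝ)
    (hα : ∀ x : ℤ, ∃ k : ℤ, α (x + 1) - α x = 2 * Real.pi / N + 2 * Real.pi * k)
    (D : ℤ → Matrix (Fin 2) (Fin 2) ℂ)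
    (hD : ∀ x : ℤ, D x =
      !![Complex.exp (Complex.I * (Real.pi / N)) * Real.cos θ,
         Complex.exp (Complex.I * α x) * Real.sin θ;
         Complex.exp (-Complex.I * α x) * Real.sin θ,
         -Complex.exp (-Complex.I * (Real.pi / N)) * Real.cos θ])
    (x : ℤ) :
    D (x + 1) * D x =
      !![Complex.exp (2 * Real.pi * Complex.I / N), 0;
         0, Complex.exp (-(2 * Real.pi * Complex.I) / N)] :=
  stmt_5_general N θ α hα D hD x
end

section
/- Let θ ∈ (0, 2π) with cos θ ≠ 0, φ ∈ [0, 2π), ω_x − ω_{x−1} ≡ 2φ (mod 2π), and define Ψ : ℤ → ℂ² by Ψ(0) arbitrary nonzero, Ψ(x) = D⁺_x Ψ(x−1) for x ≥ 1, Ψ(x) = D⁻_x Ψ(x+1) for x ≤ −1, with D⁺, D⁻ as in Theorem 3.2. Then Ψ satisfies the eigenvalue equation e^{iφ}Ψ(x) = P_{x+1}Ψ(x+1) + Q_{x−1}Ψ(x−1) for all x ∈ ℤ, where P_y = [[cos θ, e^{iω_y}sin θ],[0,0]] and Q_y = [[0,0],[e^{−iω_y}sin θ, −cos θ]]. -/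
open Complex Matrix

theorem stmt_14 (θ φ : ℝ) (ω : ℤ → ℝ)
    (hθ : θ ∈ Set.Ioo 0 (2 * Real.pi)) (hcos : Real.cos θ ≠ 0)
    (hφ : φ ∈ Set.Ico 0 (2 * Real.pi))
    (hω : ∀ x : ℤ, ∃ k : ℤ, ω x - ω (x - 1) = 2 * φ + 2 * Real.pi * k)
    (α : ℤ → ℝ) (hα : ∀ x : ℤ, α x = φ + ω (x - 1))
    (Dp Dm : ℤ → Matrix (Fin 2) (Fin 2) ℂ)
    (hDp : ∀ x : ℤ, Dp x =
      !![Complex.exp (Complex.I * φ) * Real.cos θ,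
         Complex.exp (Complex.I * α x) * Real.sin θ;
         Complex.exp (-Complex.I * α x) * Real.sin θ,
         -Complex.exp (-Complex.I * φ) * Real.cos θ])
    (hDm : ∀ x : ℤ, Dm x =
      !![Complex.exp (-Complex.I * φ) * Real.cos θ,
         Complex.exp (Complex.I * α (x + 1)) * Real.sin θ;
         Complex.exp (-Complex.I * α (x + 1)) * Real.sin θ,
         -Complex.exp (Complex.I * φ) * Real.cos θ])
    (P Q : ℤ → Matrix (Fin 2) (Fin 2) ℂ)
    (hP : ∀ y : ℤ, P y =
      !![(Real.cos θ : ℂ), Complex.exp (Complex.I * ω y) * Real.sin θ; 0, 0])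
    (hQ : ∀ y : ℤ, Q y =
      !![0, 0; Complex.exp (-Complex.I * ω y) * Real.sin θ, -(Real.cos θ : ℂ)])
    (Ψ : ℤ → Fin 2 → ℂ) (hΨ0 : Ψ 0 ≠ 0)
    (hrecp : ∀ x : ℤ, 1 ≤ x → Ψ x = (Dp x).mulVec (Ψ (x - 1)))
    (hrecm : ∀ x : ℤ, x ≤ -1 → Ψ x = (Dm x).mulVec (Ψ (x + 1))) :
    ∀ x : ℤ,
      Complex.exp (Complex.I * φ) • Ψ x =
        (P (x + 1)).mulVec (Ψ (x + 1)) + (Q (x - 1)).mulVec (Ψ (x - 1)) := by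
  intro x
  set c : ℂ := (Real.cos θ : ℂ) with hc
  set s : ℂ := (Real.sin θ : ℂ) with hs
  have hsc : s ^ 2 + c ^ 2 = 1 := by
    rw [hc, hs]
    exact_mod_cast Real.sin_sq_add_cos_sq θ
  obtain ⟨k, hk⟩ := hω (x + 1)
  simp only [add_sub_cancel_right] at hk
  have hk2 : ω (x + 1) = ω x + 2 * φ + 2 * Real.pi * k := by linarith
  -- the eigenvalue
  set E : ℂ := Complex.exp (Complex.I * φ) with hE
  have hEEi : E * Complex.exp (-(Complex.I * φ)) = 1 := by
    rw [hE, ← Complex.exp_add]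
    simp
  -- key matrix identities
  have hαx : α x = φ + ω (x - 1) := hα x
  have hαx1 : α (x + 1) = φ + ω x := by
    rw [hα (x + 1)]; norm_num
  have hPD : P (x + 1) * Dp (x + 1) = E • !![(1 : ℂ), 0; 0, 0] := by
    rw [hP, hDp, hαx1]
    ext i j
    fin_cases i <;> fin_cases j <;>
      simp [Matrix.mul_apply, Fin.sum_univ_two, ← hc, ← hs, ← hE]
    · -- entry (0,0)
      have key : Complex.exp (Complex.I * (ω (x + 1) : ℝ)) *
          Complex.exp (-(Complex.I * ((φ : ℂ) + (ω x : ℝ)))) = E := by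
        rw [hE, ← Complex.exp_add,
          show Complex.I * ((ω (x + 1) : ℝ) : ℂ) + -(Complex.I * ((φ : ℂ) + (ω x : ℝ)))
              = Complex.I * (φ : ℝ) + (k : ℤ) * (2 * (Real.pi : ℂ) * Complex.I) by
            push_cast [hk2]; ring,
          Complex.exp_add, Complex.exp_int_mul_two_pi_mul_I, mul_one]
      linear_combination s ^ 2 * key + E * hsc
    · -- entry (0,1)
      have key : Complex.exp (Complex.I * (ω (x + 1) : ℝ)) *
          Complex.exp (-(Complex.I * (φ : ℂ))) = Complex.exp (Complex.I * ((φ : ℂ) + (ω x : ℝ))) := by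
        rw [← Complex.exp_add,
          show Complex.I * ((ω (x + 1) : ℝ) : ℂ) + -(Complex.I * (φ : ℂ))
              = Complex.I * ((φ : ℂ) + (ω x : ℝ)) + (k : ℤ) * (2 * (Real.pi : ℂ) * Complex.I) by
            push_cast [hk2]; ring,
          Complex.exp_add, Complex.exp_int_mul_two_pi_mul_I, mul_one]
      linear_combination (-(c * s)) * key
  have hQE : Q (x - 1) = E • (!![(0 : ℂ), 0; 0, 1] * Dp x) := by
    rw [hQ, hDp, hαx]
    ext i j
    fin_cases i <;> fin_cases j <;>
      simp [Matrix.mul_apply, Fin.sum_univ_two, ← hc, ← hs, ← hE]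
    · -- entry (1,0)
      have key : E * Complex.exp (-(Complex.I * ((φ : ℂ) + (ω (x - 1) : ℝ)))) =
          Complex.exp (-(Complex.I * ((ω (x - 1) : ℝ) : ℂ))) := by
        rw [hE, ← Complex.exp_add]
        congr 1
        push_cast; ring
      linear_combination (-s) * key
    · -- entry (1,1)
      linear_combination (-c) * hEEi
  have hQD : Q (x - 1) * Dm (x - 1) = E • !![(0 : ℂ), 0; 0, 1] := by
    rw [hQ, hDm, show (x - 1 : ℤ) + 1 = x by ring, hαx]
    ext i j
    fin_cases i <;> fin_cases j <;>
      simp [Matrix.mul_apply, Fin.sum_univ_two, ← hc, ← hs, ← hE]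
    · -- entry (1,0)
      have key : Complex.exp (-(Complex.I * ((ω (x - 1) : ℝ) : ℂ))) *
          Complex.exp (-(Complex.I * (φ : ℂ))) =
          Complex.exp (-(Complex.I * ((φ : ℂ) + (ω (x - 1) : ℝ)))) := by
        rw [← Complex.exp_add]
        congr 1
        push_cast; ring
      linear_combination (c * s) * key
    · -- entry (1,1)
      have key : Complex.exp (-(Complex.I * ((ω (x - 1) : ℝ) : ℂ))) *
          Complex.exp (Complex.I * ((φ : ℂ) + (ω (x - 1) : ℝ))) = E := by
        rw [hE, ← Complex.exp_add]
        congr 1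
        push_cast; ring
      linear_combination s ^ 2 * key + E * hsc
  have hPE : P (x + 1) = E • (!![(1 : ℂ), 0; 0, 0] * Dm x) := by
    rw [hP, hDm, hαx1]
    ext i j
    fin_cases i <;> fin_cases j <;>
      simp [Matrix.mul_apply, Fin.sum_univ_two, ← hc, ← hs, ← hE]
    · -- entry (0,0)
      linear_combination (-c) * hEEi
    · -- entry (0,1)
      have key : Complex.exp (Complex.I * (ω (x + 1) : ℝ)) =
          E * Complex.exp (Complex.I * ((φ : ℂ) + (ω x : ℝ))) := by
        rw [hE, ← Complex.exp_add]
        rw [show Complex.I * ((φ : ℝ) : ℂ) + Complex.I * ((φ : ℂ) + (ω x : ℝ))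
              = Complex.I * ((ω (x + 1) : ℝ) : ℂ) + (-k : ℤ) * (2 * (Real.pi : ℂ) * Complex.I) by
            push_cast [hk2]; ring]
        rw [Complex.exp_add, Complex.exp_int_mul_two_pi_mul_I, mul_one]
      linear_combination s * key
  have hsplit : Ψ x = ![Ψ x 0, 0] + ![0, Ψ x 1] := by
    funext i; fin_cases i <;> simp
  have hE0 : (!![(1 : ℂ), 0; 0, 0]).mulVec (Ψ x) = ![Ψ x 0, 0] := by
    funext i; fin_cases i <;>
      simp [Matrix.mulVec, dotProduct, Fin.sum_univ_two]
  have hE1 : (!![(0 : ℂ), 0; 0, 1]).mulVec (Ψ x) = ![0, Ψ x 1] := by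
    funext i; fin_cases i <;>
      simp [Matrix.mulVec, dotProduct, Fin.sum_univ_two]
  have hA : (P (x + 1)).mulVec (Ψ (x + 1)) = E • ![Ψ x 0, 0] := by
    rcases le_or_gt 0 x with hx | hx
    · have e1 : Ψ (x + 1) = (Dp (x + 1)).mulVec (Ψ x) := by
        have := hrecp (x + 1) (by omega)
        simpa using this
      rw [e1, Matrix.mulVec_mulVec, hPD, Matrix.smul_mulVec, hE0]
    · have e1 : Ψ x = (Dm x).mulVec (Ψ (x + 1)) := hrecm x (by omega)
      rw [hPE, Matrix.smul_mulVec, ← Matrix.mulVec_mulVec, ← e1, hE0]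
  have hB : (Q (x - 1)).mulVec (Ψ (x - 1)) = E • ![0, Ψ x 1] := by
    rcases le_or_gt 1 x with hx | hx
    · have e2 : Ψ x = (Dp x).mulVec (Ψ (x - 1)) := hrecp x hx
      rw [hQE, Matrix.smul_mulVec, ← Matrix.mulVec_mulVec, ← e2, hE1]
    · have e2 : Ψ (x - 1) = (Dm (x - 1)).mulVec (Ψ x) := by
        have := hrecm (x - 1) (by omega)
        simpa using this
      rw [e2, Matrix.mulVec_mulVec, hQD, Matrix.smul_mulVec, hE1]
  rw [hA, hB, ← smul_add, ← hsplit]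
end
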